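/- arXiv:2604.08416 — 2 statements merged into one kernel-verified Lean document; each statement's English description precedes it below -/
import Mathlib

section
/- Let $Q \subseteq \mathbb{R}^d$ be a cube, $1 \le p \le q < \infty$, and let $\alpha \ge \beta := \frac1q + \frac1{p'}$. Then for any pair of weights $(\omega,\sigma)$ on $Q$, the two-weight Muckenhoupt characteristics satisfy $[\omega,\sigma]_{A^{\alpha}_{p,q}(Q)} = |Q|^{\alpha-\beta}\,[\omega,\sigma]_{A^{\beta}_{p,q}(Q)}$. -/
open MeasureTheory
open scoped ENNReal NNReal

noncomputable section

abbrev Euc (d : ℕ) := EuclideanSpace ℝ (Fin d)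

structure Cube (d : ℕ) where
  center : Euc d
  side : ℝ
  side_pos : 0 < side

namespace Cube

variable {d : ℕ}

/-- A (half-open) axis-parallel cube in `ℝ^d`. -/
def toSet (Q : Cube d) : Set (Euc d) :=
  {x | ∀ i, Q.center i - Q.side / 2 ≤ x i ∧ x i < Q.center i + Q.side / 2}

/-- The volume `|Q| = ℓ(Q)^d` of a cube. -/
def vol (Q : Cube d) : ℝ := Q.side ^ d

/-- The average `⟨f⟩_Q = |Q|⁻¹ ∫_Q f`. -/
def avg (Q : Cube d) (f : Euc d → ℝ) : ℝ := Q.vol⁻¹ * ∫ x in Q.toSet, f x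

/-- The `ℝ≥0∞`-valued average of a nonnegative function. -/
def elavg (Q : Cube d) (g : Euc d → ℝ≥0∞) : ℝ≥0∞ :=
  (∫⁻ x in Q.toSet, g x) / ENNReal.ofReal Q.vol

/-- The `L^t`-average `⟨f⟩_{t,Q} = (|Q|⁻¹ ∫_Q |f|^t)^{1/t}`, with the
essential supremum when `t = ∞`. -/
def lavg (Q : Cube d) (t : ℝ≥0∞) (f : Euc d → ℝ) : ℝ≥0∞ :=
  if t = ⊤ then essSup (fun x => ENNReal.ofReal |f x|) (volume.restrict Q.toSet)
  else ((∫⁻ x in Q.toSet, ENNReal.ofReal |f x| ^ t.toReal) / ENNReal.ofReal Q.vol) ^ (1 / t.toReal)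

/-- The concentric dilation `γ Q` of a cube (only intended for `γ ≥ 1`). -/
def scale (γ : ℝ) (Q : Cube d) : Cube d :=
  ⟨Q.center, max γ 1 * Q.side,
    mul_pos (lt_of_lt_of_le one_pos (le_max_right γ 1)) Q.side_pos⟩

/-- The dyadic subcube of `Q` of generation `j` with index `k`. -/
def dyadicSub (Q : Cube d) (j : ℕ) (k : Fin d → ℕ) : Cube d where
  center := WithLp.toLp 2 (fun i => Q.center i - Q.side / 2 + ((k i : ℝ) + 1 / 2) * (Q.side / 2 ^ j))
  side := Q.side / 2 ^ j
  side_pos := div_pos Q.side_pos (by positivity)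

/-- The `2ℓ(Q)`-periodic even reflection map: `reflect Q x ∈ Q` and functions
defined on `Q` are extended outside `Q` by precomposing with `reflect Q`. -/
def reflect (Q : Cube d) (x : Euc d) : Euc d := WithLp.toLp 2 (fun i =>
  (Q.center i - Q.side / 2) + Q.side -
    |(x i - (Q.center i - Q.side / 2) -
        2 * Q.side * ((⌊(x i - (Q.center i - Q.side / 2)) / (2 * Q.side)⌋ : ℤ) : ℝ)) - Q.side|)

end Cube

/-- `R` is a dyadic subcube of `Q`. -/
def IsDyadicSub {d : ℕ} (Q R : Cube d) : Prop :=
  ∃ (j : ℕ) (k : Fin d → ℕ), (∀ i, k i < 2 ^ j) ∧ R = Q.dyadicSub j k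

/-- A collection of cubes is sparse if each `R` carries a subset `E R ⊆ R`
with `|E R| ≥ |R|/2`, the sets `E R` being pairwise disjoint. -/
def IsSparse {d : ℕ} (𝒮 : Set (Cube d)) : Prop :=
  ∃ E : Cube d → Set (Euc d),
    (∀ R ∈ 𝒮, MeasurableSet (E R) ∧ E R ⊆ R.toSet ∧
      ENNReal.ofReal R.vol ≤ 2 * volume (E R)) ∧
    𝒮.Pairwise fun R R' => Disjoint (E R) (E R')

/-- The Hölder conjugate `p'` of `p`, as an extended real exponent. -/
def conjE (p : ℝ) : ℝ≥0∞ := if p = 1 then ⊤ else ENNReal.ofReal (p / (p - 1))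

/-- The two-weight Muckenhoupt characteristic
`[ω,σ]_{A^α_{p,q}(Q)} = sup_{R ⊆ Q} |R|^α ⟨ω⟩_{q,R} ⟨σ⁻¹⟩_{p',R}`. -/
def muck {d : ℕ} (Q : Cube d) (p q α : ℝ) (ω σ : Euc d → ℝ) : ℝ≥0∞ :=
  ⨆ R : {R : Cube d // R.toSet ⊆ Q.toSet},
    ENNReal.ofReal (R.1.vol ^ α) * R.1.lavg (ENNReal.ofReal q) ω *
      R.1.lavg (conjE p) fun x => (σ x)⁻¹

/-- The classical Muckenhoupt `A_p` characteristic
`[w]_{A_p} = sup_Q ⟨w⟩_{1,Q} ⟨w⁻¹⟩_{1/(p-1),Q}` over all cubes in `ℝ^d`. -/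
def apChar (d : ℕ) (p : ℝ) (w : Euc d → ℝ) : ℝ≥0∞ :=
  ⨆ R : Cube d,
    R.lavg 1 w * R.lavg (if p = 1 then ⊤ else ENNReal.ofReal (1 / (p - 1))) fun x => (w x)⁻¹

/-- The localized maximal function `M(w 1_R)(x) = sup_{S ⊆ R, x ∈ S} ⟨w⟩_{1,S}`. -/
def locMaxFn {d : ℕ} (R : Cube d) (w : Euc d → ℝ) (x : Euc d) : ℝ≥0∞ :=
  ⨆ S : {S : Cube d // S.toSet ⊆ R.toSet ∧ x ∈ S.toSet}, S.1.lavg 1 w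

/-- The local Fujii–Wilson `A_∞(Q)` characteristic. -/
def ainf {d : ℕ} (Q : Cube d) (w : Euc d → ℝ) : ℝ≥0∞ :=
  ⨆ R : {R : Cube d // R.toSet ⊆ Q.toSet},
    (∫⁻ x in R.1.toSet, locMaxFn R.1 w x) / ∫⁻ x in R.1.toSet, ENNReal.ofReal (w x)

/-- The weighted norm `‖g‖_{L^p_σ(A)} = (∫_A |g|^p σ^p)^{1/p}` (weight as multiplier). -/
def wLp {d : ℕ} (A : Set (Euc d)) (p : ℝ) (σ g : Euc d → ℝ) : ℝ≥0∞ :=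
  (∫⁻ x in A, ENNReal.ofReal (|g x| * σ x) ^ p) ^ (1 / p)

/-- The fractional difference quotient
`f^{s,r}_A(x) = (∫_A |f(x)-f(y)|^r / |x-y|^{d+sr} dy)^{1/r}`. -/
def fsr {d : ℕ} (A : Set (Euc d)) (s r : ℝ) (f : Euc d → ℝ) (x : Euc d) : ℝ≥0∞ :=
  (∫⁻ y in A, ENNReal.ofReal |f x - f y| ^ r / edist x y ^ ((d : ℝ) + s * r)) ^ (1 / r)

/-- `f^{s,r}_{3R}`, where `f` is extended outside `Q` by periodic reflection. -/
def fsr3 {d : ℕ} (Q : Cube d) (s r : ℝ) (f : Euc d → ℝ) (R : Cube d) (x : Euc d) : ℝ≥0∞ :=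
  fsr (Cube.scale 3 R).toSet s r (fun y => f (Q.reflect y)) x

/-- The weighted weak norm `‖g‖_{L^{q,∞}_ω(Q)}` of an `ℝ≥0∞`-valued function. -/
def weakNE {d : ℕ} (Q : Cube d) (q : ℝ) (ω : Euc d → ℝ) (g : Euc d → ℝ≥0∞) : ℝ≥0∞ :=
  ⨆ lam : ℝ≥0, (lam : ℝ≥0∞) *
    (∫⁻ x in Q.toSet ∩ {x | (lam : ℝ≥0∞) < g x}, ENNReal.ofReal (ω x) ^ q) ^ (1 / q)

/-- The weighted weak norm `‖g‖_{L^{q,∞}_ω(Q)}` of a real valued function. -/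
def weakN {d : ℕ} (Q : Cube d) (q : ℝ) (ω g : Euc d → ℝ) : ℝ≥0∞ :=
  weakNE Q q ω fun x => ENNReal.ofReal |g x|

/-- The weighted Triebel–Lizorkin seminorm `[u]_{F^{s,σ}_{p,r}(Q)}`. -/
def fSemi {d : ℕ} (Q : Cube d) (p r s : ℝ) (σ u : Euc d → ℝ) : ℝ≥0∞ :=
  (∫⁻ x in Q.toSet, fsr Q.toSet s r u x ^ p * ENNReal.ofReal (σ x) ^ p) ^ (1 / p)
/-!
With `β = 1/q + 1/p'`, the `β`-weighted product
`|R|^β ⟨ω⟩_{q,R} ⟨σ⁻¹⟩_{p',R} = ‖ω‖_{L^q(R)} ‖σ⁻¹‖_{L^{p'}(R)}` carries no normalisation,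
so it grows with `R` and its supremum over `R ⊆ Q` is attained at `R = Q`. For `α ≥ β` the
extra factor `|R|^{α-β}` is monotone as well, so the `α`-supremum is attained at `Q` too.
-/

open ENNReal

namespace Cube

variable {d : ℕ}

lemma vol_pos (R : Cube d) : 0 < R.vol := pow_pos R.side_pos d

lemma side_le_of_subset {R Q : Cube d} (hd : d ≠ 0) (h : R.toSet ⊆ Q.toSet) :
    R.side ≤ Q.side := by
  obtain ⟨i⟩ : Nonempty (Fin d) := ⟨⟨0, Nat.pos_of_ne_zero hd⟩⟩
  let x : ℝ → Euc d := fun s =>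
    WithLp.toLp 2 fun j => R.center j - R.side / 2 + if j = i then s else 0
  have hx : ∀ s, 0 ≤ s → s < R.side → x s ∈ R.toSet := by
    intro s hs₀ hs j
    simp only [x]
    split_ifs <;> constructor <;> linarith [R.side_pos]
  by_contra! hlt
  -- two points of `Q` whose `i`-th coordinates are `Q.side` apart
  have h₀ := h (hx 0 le_rfl R.side_pos) i
  have h₁ := h (hx Q.side Q.side_pos.le hlt) i
  simp only [x, if_true] at h₀ h₁
  linarith [h₀.1, h₁.2]

lemma vol_le_of_subset {R Q : Cube d} (h : R.toSet ⊆ Q.toSet) : R.vol ≤ Q.vol := by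
  rcases eq_or_ne d 0 with hd | hd
  · simp [vol, hd]
  · exact pow_le_pow_left₀ R.side_pos.le (side_le_of_subset hd h) d

lemma ofReal_vol_rpow_mul_lavg (R : Cube d) {t : ℝ≥0∞} (ht : t ≠ ⊤) (f : Euc d → ℝ) :
    ENNReal.ofReal R.vol ^ (1 / t.toReal) * R.lavg t f
      = (∫⁻ x in R.toSet, ENNReal.ofReal |f x| ^ t.toReal) ^ (1 / t.toReal) := by
  rw [lavg, if_neg ht, ← ENNReal.mul_rpow_of_nonneg _ _ (by positivity),
    ENNReal.mul_div_cancel (by simp [R.vol_pos]) ENNReal.ofReal_ne_top]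

lemma ofReal_vol_rpow_mul_lavg_mono {R Q : Cube d} (h : R.toSet ⊆ Q.toSet) (t : ℝ≥0∞)
    (f : Euc d → ℝ) :
    ENNReal.ofReal R.vol ^ (1 / t.toReal) * R.lavg t f
      ≤ ENNReal.ofReal Q.vol ^ (1 / t.toReal) * Q.lavg t f := by
  rcases eq_or_ne t ⊤ with rfl | ht
  · rw [lavg, lavg, if_pos rfl, if_pos rfl]
    simp only [toReal_top, _root_.div_zero, ENNReal.rpow_zero, one_mul]
    exact essSup_mono_measure' (Measure.restrict_mono h le_rfl)
  · rw [ofReal_vol_rpow_mul_lavg R ht, ofReal_vol_rpow_mul_lavg Q ht]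
    exact rpow_le_rpow (lintegral_mono_set h) (by positivity)

lemma ofReal_vol_rpow_mul_lavg_mul_lavg_mono {R Q : Cube d} (h : R.toSet ⊆ Q.toSet)
    (s t : ℝ≥0∞) (f g : Euc d → ℝ) :
    ENNReal.ofReal (R.vol ^ (1 / s.toReal + 1 / t.toReal)) * R.lavg s f * R.lavg t g
      ≤ ENNReal.ofReal (Q.vol ^ (1 / s.toReal + 1 / t.toReal)) * Q.lavg s f * Q.lavg t g := by
  have split : ∀ S : Cube d,
      ENNReal.ofReal (S.vol ^ (1 / s.toReal + 1 / t.toReal)) * S.lavg s f * S.lavg t g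
        = (ENNReal.ofReal S.vol ^ (1 / s.toReal) * S.lavg s f)
          * (ENNReal.ofReal S.vol ^ (1 / t.toReal) * S.lavg t g) := by
    intro S
    rw [← ofReal_rpow_of_pos S.vol_pos,
      rpow_add _ _ (by simp [S.vol_pos]) ofReal_ne_top]
    ring
  rw [split, split]
  exact mul_le_mul' (ofReal_vol_rpow_mul_lavg_mono h s f) (ofReal_vol_rpow_mul_lavg_mono h t g)

end Cube

lemma one_div_toReal_conjE {p : ℝ} (hp : 1 ≤ p) : 1 / (conjE p).toReal = 1 - 1 / p := by
  unfold conjE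
  split_ifs with hp₁
  · simp [hp₁]
  · have : 0 < p - 1 := by grind
    rw [toReal_ofReal (by positivity)]
    field_simp

section Muck

variable {d : ℕ}

def muckTerm (R : Cube d) (p q α : ℝ) (ω σ : Euc d → ℝ) : ℝ≥0∞ :=
  ENNReal.ofReal (R.vol ^ α) * R.lavg (ENNReal.ofReal q) ω * R.lavg (conjE p) fun x => (σ x)⁻¹

lemma muckTerm_eq_mul (R : Cube d) (p q α γ : ℝ) (ω σ : Euc d → ℝ) :
    muckTerm R p q α ω σ = ENNReal.ofReal (R.vol ^ (α - γ)) * muckTerm R p q γ ω σ := by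
  rw [muckTerm, muckTerm, ← mul_assoc, ← mul_assoc,
    ← ofReal_mul (Real.rpow_pos_of_pos R.vol_pos _).le, ← Real.rpow_add R.vol_pos, sub_add_cancel]

lemma muckTerm_beta_le_of_subset {R Q : Cube d} (h : R.toSet ⊆ Q.toSet) {p q : ℝ} (hp : 1 ≤ p)
    (hq : 0 < q) (ω σ : Euc d → ℝ) :
    muckTerm R p q (1 / q + (1 - 1 / p)) ω σ ≤ muckTerm Q p q (1 / q + (1 - 1 / p)) ω σ := by
  have := Cube.ofReal_vol_rpow_mul_lavg_mul_lavg_mono h (ENNReal.ofReal q) (conjE p) ω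
    fun x => (σ x)⁻¹
  rwa [toReal_ofReal hq.le, one_div_toReal_conjE hp] at this

lemma muckTerm_le_of_subset_of_le {R Q : Cube d} (h : R.toSet ⊆ Q.toSet) {p q α γ : ℝ}
    (hγα : γ ≤ α) {ω σ : Euc d → ℝ} (hγ : muckTerm R p q γ ω σ ≤ muckTerm Q p q γ ω σ) :
    muckTerm R p q α ω σ ≤ muckTerm Q p q α ω σ := by
  rw [muckTerm_eq_mul R p q α γ, muckTerm_eq_mul Q p q α γ]
  exact mul_le_mul' (ofReal_le_ofReal (Real.rpow_le_rpow R.vol_pos.le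
    (Cube.vol_le_of_subset h) (sub_nonneg.mpr hγα))) hγ

lemma muck_eq_muckTerm_of_forall_le {Q : Cube d} {p q α : ℝ} {ω σ : Euc d → ℝ}
    (h : ∀ R : Cube d, R.toSet ⊆ Q.toSet → muckTerm R p q α ω σ ≤ muckTerm Q p q α ω σ) :
    muck Q p q α ω σ = muckTerm Q p q α ω σ :=
  le_antisymm (iSup_le fun R => h R.1 R.2)
    (le_iSup (fun R : {R : Cube d // R.toSet ⊆ Q.toSet} => muckTerm R.1 p q α ω σ)
      ⟨Q, subset_rfl⟩)

end Muck

theorem muck_eq_of_beta_le_general (d : ℕ) (Q : Cube d) (p q α : ℝ)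
    (hp : 1 ≤ p) (hpq : p ≤ q)
    (ω σ : Euc d → ℝ)
    (hα : 1 / q + (1 - 1 / p) ≤ α) :
    muck Q p q α ω σ =
      ENNReal.ofReal (Q.vol ^ (α - (1 / q + (1 - 1 / p)))) *
        muck Q p q (1 / q + (1 - 1 / p)) ω σ := by
  have hβ : ∀ R : Cube d, R.toSet ⊆ Q.toSet →
      muckTerm R p q (1 / q + (1 - 1 / p)) ω σ ≤ muckTerm Q p q (1 / q + (1 - 1 / p)) ω σ :=
    fun R hR => muckTerm_beta_le_of_subset hR hp (by linarith) ω σ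
  rw [muck_eq_muckTerm_of_forall_le hβ,
    muck_eq_muckTerm_of_forall_le fun R hR => muckTerm_le_of_subset_of_le hR hα (hβ R hR),
    muckTerm_eq_mul Q p q α]

/-- For `α ≥ β := 1/q + 1/p'`, the `A^α_{p,q}(Q)` characteristic
equals `|Q|^{α-β}` times the `A^β_{p,q}(Q)` characteristic. -/
theorem muck_eq_of_beta_le (d : ℕ) (Q : Cube d) (p q α : ℝ)
    (hp : 1 ≤ p) (hpq : p ≤ q)
    (ω σ : Euc d → ℝ) (hω : ∀ x, 0 < ω x) (hσ : ∀ x, 0 < σ x)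
    (hωm : Measurable ω) (hσm : Measurable σ)
    (hα : 1 / q + (1 - 1 / p) ≤ α) :
    muck Q p q α ω σ =
      ENNReal.ofReal (Q.vol ^ (α - (1 / q + (1 - 1 / p)))) *
        muck Q p q (1 / q + (1 - 1 / p)) ω σ :=
  muck_eq_of_beta_le_general d Q p q α hp hpq ω σ hα
end
end

section
/- Let $Q = [-1,1] \subseteq \mathbb{R}$, $q, r \in [1,\infty)$, and $s \in (0,1)$ with $\frac12 < sq < 1$. Then there exists a smooth function $f : Q \to \mathbb{R}$ with $\int_{-1}^1 |f'(x)|\,dx = 1$ and $\Big(\int_{-1}^1\Big(\int_{-1}^1 \frac{|f(x)-f(y)|^r}{|x-y|^{1+sr}}dy\Big)^{q/r}dx\Big)^{1/q} \ge c\,(1-sq)^{-1/q}$ for an absolute constant $c > 0$ independent of $s, q, r$. -/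
open MeasureTheory
open scoped ENNReal NNReal

noncomputable section

section AuxSharp

private lemma antitone_deriv_nonpos' {f : ℝ → ℝ} (hf : Antitone f) {x : ℝ}
    (hd : DifferentiableAt ℝ f x) : deriv f x ≤ 0 := by
  have h := hasDerivAt_iff_tendsto_slope.1 hd.hasDerivAt
  have h' : Filter.Tendsto (slope f x) (nhdsWithin x (Set.Ioi x)) (nhds (deriv f x)) :=
    h.mono_left (nhdsWithin_mono x fun y hy => ne_of_gt hy)
  refine le_of_tendsto h' ?_
  filter_upwards [self_mem_nhdsWithin] with y hy
  have hxy : x < y := hy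
  rw [slope_def_field]
  have h1 : f y ≤ f x := hf hxy.le
  exact div_nonpos_of_nonpos_of_nonneg (by linarith) (by linarith)

private lemma two_mul_le_four_rpow' {r : ℝ} (hr : 1 ≤ r) : 2 * r ≤ (4:ℝ) ^ r := by
  have hlog4 : (1:ℝ) ≤ Real.log 4 := by
    have h4 : (4:ℝ) = 2 ^ (2:ℕ) := by norm_num
    rw [h4, Real.log_pow]
    have := Real.log_two_gt_d9
    push_cast
    nlinarith
  have h2 : Real.exp ((r - 1) * Real.log 4) = (4:ℝ) ^ (r - 1) := by
    rw [Real.rpow_def_of_pos (by norm_num : (0:ℝ) < 4), mul_comm]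
  have h3 : (4:ℝ) ^ r = 4 * (4:ℝ) ^ (r - 1) := by
    have h := Real.rpow_add (show (0:ℝ) < 4 by norm_num) 1 (r - 1)
    rw [Real.rpow_one] at h
    rw [show (1:ℝ) + (r - 1) = r by ring] at h
    exact h
  rw [h3, ← h2]
  nlinarith [Real.add_one_le_exp ((r - 1) * Real.log 4)]

private lemma key_quarter' {s r : ℝ} (hs : 0 < s) (hs1 : s < 1) (hr : 1 ≤ r) :
    (1/4 : ℝ) ≤ ((1 - 2 ^ (-(s * r))) / (s * r)) ^ (1 / r) := by
  have hr0 : (0:ℝ) < r := lt_of_lt_of_le one_pos hr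
  set u : ℝ := s * r with hu_def
  have hu0 : 0 < u := mul_pos hs hr0
  have hur : u ≤ r := by nlinarith
  have hBpos : 0 < (1 - (2:ℝ) ^ (-u)) / u := by
    apply div_pos _ hu0
    have h : (2:ℝ) ^ (-u) < 2 ^ (0:ℝ) :=
      Real.rpow_lt_rpow_of_exponent_lt one_lt_two (by linarith)
    simp only [Real.rpow_zero] at h
    linarith
  set B : ℝ := (1 - (2:ℝ) ^ (-u)) / u with hB_def
  rcases le_or_gt u 1 with hu1 | hu1
  · have hL : (0.6931471803 : ℝ) < Real.log 2 := Real.log_two_gt_d9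
    have hE : 1 + u * Real.log 2 ≤ (2:ℝ) ^ u := by
      have h := Real.add_one_le_exp (u * Real.log 2)
      rw [Real.rpow_def_of_pos two_pos, mul_comm (Real.log 2) u]
      linarith
    have hEpos : (0:ℝ) < (2:ℝ) ^ u := Real.rpow_pos_of_pos two_pos u
    have hinv : (2:ℝ) ^ (-u) = ((2:ℝ) ^ u)⁻¹ := by
      rw [Real.rpow_neg (by norm_num : (0:ℝ) ≤ 2)]
    have hinvle : ((2:ℝ) ^ u)⁻¹ ≤ (1 + u * Real.log 2)⁻¹ :=
      inv_anti₀ (by nlinarith) hE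
    have hquarter : u / 4 ≤ 1 - (2:ℝ) ^ (-u) := by
      rw [hinv]
      have h5 : (1 + u * Real.log 2)⁻¹ ≤ 1 - u / 4 := by
        rw [inv_le_iff_one_le_mul₀ (by nlinarith)]
        nlinarith [mul_nonneg (mul_nonneg hu0.le (sub_nonneg.2 hu1))
            (by linarith : (0:ℝ) ≤ Real.log 2),
          mul_nonneg hu0.le (by linarith : (0:ℝ) ≤ 3 * Real.log 2 - 1)]
      linarith
    have hB14 : (1/4 : ℝ) ≤ B := by
      rw [hB_def, le_div_iff₀ hu0]
      linarith
    rcases le_or_gt B 1 with hB1 | hB1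
    · calc (1/4:ℝ) ≤ B := hB14
        _ = B ^ (1:ℝ) := (Real.rpow_one B).symm
        _ ≤ B ^ (1/r) := Real.rpow_le_rpow_of_exponent_ge hBpos hB1 (by
            rw [div_le_one hr0]; exact hr)
    · have h := Real.one_le_rpow hB1.le (by positivity : (0:ℝ) ≤ 1/r)
      linarith
  · have h2u : (2:ℝ) ^ (-u) ≤ 1/2 := by
      have h := Real.rpow_le_rpow_of_exponent_le one_le_two
        (by linarith : -u ≤ (-1:ℝ))
      have h21 : (2:ℝ) ^ (-1:ℝ) = 1/2 := by
        rw [Real.rpow_neg_one]; norm_num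
      linarith [h.trans_eq h21]
    have hB_ge : ((2*r)⁻¹ : ℝ) ≤ B := by
      rw [hB_def, le_div_iff₀ hu0]
      rw [inv_mul_eq_div, div_le_iff₀ (by linarith : (0:ℝ) < 2*r)]
      nlinarith
    have step : ((2*r)⁻¹ : ℝ) ^ (1/r) ≤ B ^ (1/r) :=
      Real.rpow_le_rpow (by positivity) hB_ge (by positivity)
    refine le_trans ?_ step
    have h4 : ((2*r) : ℝ) ^ (1/r) ≤ 4 := by
      have h5 : ((2*r) : ℝ) ^ (1/r) ≤ ((4:ℝ) ^ r) ^ (1/r) :=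
        Real.rpow_le_rpow (by positivity) (two_mul_le_four_rpow' hr) (by positivity)
      have h6 : ((4:ℝ) ^ r) ^ (1/r) = 4 := by
        rw [← Real.rpow_mul (by norm_num : (0:ℝ) ≤ 4), mul_one_div, div_self hr0.ne',
          Real.rpow_one]
      linarith [h5.trans_eq h6]
    rw [Real.inv_rpow (by positivity : (0:ℝ) ≤ 2*r)]
    rw [le_inv_comm₀ (by norm_num) (by positivity)]
    calc ((2*r):ℝ) ^ (1/r) ≤ 4 := h4
      _ = (1/4:ℝ)⁻¹ := by norm_num

end AuxSharp

set_option maxHeartbeats 1000000 in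
/-- Proposition 6.2, sharpness in dimension one: for
`1/2 < sq < 1` there is a smooth `f` on `Q = [-1,1]` with `∫ |f'| = 1` and
`[f]_{F^s_{q,r}(Q)} ≥ c (1 - sq)^{-1/q}` for an absolute constant `c > 0`. -/
theorem sharpness_one_dim :
    ∃ c : ℝ, 0 < c ∧
      ∀ q r s : ℝ, 1 ≤ q → 1 ≤ r → 0 < s → 1 / 2 < s * q → s * q < 1 →
        ∃ f : ℝ → ℝ, ContDiff ℝ (⊤ : ℕ∞) f ∧
          (∫ x in Set.Icc (-1 : ℝ) 1, |deriv f x|) = 1 ∧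
          ENNReal.ofReal (c * (1 - s * q) ^ (-(1 / q))) ≤
            (∫⁻ x in Set.Icc (-1 : ℝ) 1,
              (∫⁻ y in Set.Icc (-1 : ℝ) 1,
                ENNReal.ofReal |f x - f y| ^ r /
                  ENNReal.ofReal |x - y| ^ (1 + s * r)) ^ (q / r)) ^ (1 / q) := by
  refine ⟨1/64, by norm_num, fun q r s hq hr hs hsq1 hsq2 => ?_⟩
  have hq0 : (0:ℝ) < q := lt_of_lt_of_le one_pos hq
  have hr0 : (0:ℝ) < r := lt_of_lt_of_le one_pos hr
  have hrne : r ≠ 0 := hr0.ne'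
  have hs1 : s < 1 := by nlinarith
  have h1sq : 0 < 1 - s * q := by linarith
  have hsr0 : 0 < s * r := mul_pos hs hr0
  set ε : ℝ := 2 ^ (-(1 + 2 / (1 - s * q))) with hε_def
  have hεpos : 0 < ε := Real.rpow_pos_of_pos two_pos _
  have hexp4 : (4:ℝ) ≤ 2 / (1 - s * q) := by
    rw [le_div_iff₀ h1sq]; linarith
  have hεle : ε ≤ 1/32 := by
    have h1 : ε ≤ (2:ℝ) ^ (-(5:ℝ)) :=
      Real.rpow_le_rpow_of_exponent_le one_le_two (by linarith)
    have h5 : (2:ℝ) ^ (-(5:ℝ)) = 1/32 := by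
      rw [show (-(5:ℝ)) = ((-5 : ℤ) : ℝ) by norm_num, Real.rpow_intCast]
      norm_num
    exact h1.trans h5.le
  -- the analytic approximate step function
  set g : ℝ → ℝ := fun x => (1 + Real.exp (x/ε))⁻¹ with hg_def
  have hgpos : ∀ x : ℝ, (0:ℝ) < 1 + Real.exp (x/ε) := fun x => by positivity
  have hgm : ∀ a b : ℝ, a ≤ b → g b ≤ g a := by
    intro a b hab
    simp only [hg_def]
    apply inv_anti₀ (hgpos a)
    have h := Real.exp_le_exp.2 ((div_le_div_iff_of_pos_right hεpos).2 hab)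
    linarith
  have hg01 : ∀ x : ℝ, 0 < g x ∧ g x ≤ 1 := by
    intro x
    constructor
    · simp only [hg_def]; positivity
    · simp only [hg_def]
      rw [inv_le_one_iff₀]
      right
      nlinarith [Real.exp_pos (x/ε)]
  set N : ℝ := g (-1) - g 1 with hN_def
  have hgap0 : (1/4:ℝ) ≤ g (-ε) - g ε := by
    simp only [hg_def]
    rw [show (-ε)/ε = -1 by field_simp, div_self hεpos.ne']
    have hE := Real.exp_one_gt_d9
    have hEpos : (0:ℝ) < Real.exp 1 := Real.exp_pos 1
    have h1 : (1 + Real.exp (-1:ℝ))⁻¹ - (1 + Real.exp 1)⁻¹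
        = (Real.exp 1 - 1)/(Real.exp 1 + 1) := by
      rw [Real.exp_neg]
      field_simp
      ring
    rw [h1, le_div_iff₀ (by positivity)]
    nlinarith
  have hN14 : (1/4:ℝ) ≤ N := by
    have h1 : g (-ε) ≤ g (-1) := hgm (-1) (-ε) (by linarith)
    have h2 : g 1 ≤ g ε := hgm ε 1 (by linarith)
    rw [hN_def]
    linarith
  have hNpos : (0:ℝ) < N := by linarith
  have hNle1 : N ≤ 1 := by
    have h1 := hg01 (-1)
    have h2 := hg01 1
    rw [hN_def]
    linarith [h1.2, h2.1]
  set f : ℝ → ℝ := fun x => (g x - g 1) / N with hf_def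
  have hsmooth : ContDiff ℝ (⊤ : ℕ∞) f := by
    have hg' : ContDiff ℝ (⊤ : ℕ∞) g := by
      rw [hg_def]
      exact (contDiff_const.add (Real.contDiff_exp.comp (contDiff_id.div_const ε))).inv
        (fun x => (hgpos x).ne')
    exact (hg'.sub contDiff_const).div_const N
  have hanti : Antitone f := by
    intro a b hab
    simp only [hf_def]
    rw [div_le_div_iff_of_pos_right hNpos]
    have := hgm a b hab
    linarith
  have hgap : ∀ x y : ℝ, ε ≤ x → y ≤ -ε → (1/4:ℝ) ≤ f y - f x := by
    intro x y hx hy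
    have h1 : g x ≤ g ε := hgm ε x hx
    have h2 : g (-ε) ≤ g y := hgm y (-ε) hy
    have hq1 : f y - f x = (g y - g x) / N := by
      simp only [hf_def]
      ring
    rw [hq1, le_div_iff₀ hNpos]
    nlinarith
  -- Part 1: total variation equals 1
  have hdiff : Differentiable ℝ f := hsmooth.differentiable (by simp)
  have hderiv_cont : Continuous (deriv f) := hsmooth.continuous_deriv (by simp)
  have hdnp : ∀ x, |deriv f x| = -(deriv f x) := fun x =>
    abs_of_nonpos (antitone_deriv_nonpos' hanti (hdiff x))
  have hfm1 : f (-1) = 1 := by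
    simp only [hf_def, ← hN_def]
    field_simp
  have hfp1 : f 1 = 0 := by
    simp only [hf_def]
    rw [sub_self, zero_div]
  have hint1 : (∫ x in Set.Icc (-1:ℝ) 1, |deriv f x|) = 1 := by
    simp only [hdnp]
    rw [integral_neg, MeasureTheory.integral_Icc_eq_integral_Ioc,
      ← intervalIntegral.integral_of_le (by norm_num : (-1:ℝ) ≤ 1),
      intervalIntegral.integral_deriv_eq_sub (fun x _ => hdiff x)
        (hderiv_cont.intervalIntegrable _ _),
      hfp1, hfm1]
    norm_num
  refine ⟨f, hsmooth, hint1, ?_⟩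
  -- Part 2: the lower bound
  set C0 : ℝ := (1 - 2 ^ (-(s*r))) / (s * r) with hC0_def
  have hC0pos : 0 < C0 := by
    apply div_pos _ hsr0
    have h01 : (2:ℝ) ^ (-(s*r)) < 2 ^ (0:ℝ) :=
      Real.rpow_lt_rpow_of_exponent_lt one_lt_two (by linarith)
    simp only [Real.rpow_zero] at h01
    linarith
  set C1 : ℝ := (1/4:ℝ) ^ r * C0 with hC1_def
  have hC1pos : 0 < C1 := mul_pos (Real.rpow_pos_of_pos (by norm_num) r) hC0pos
  have hinner : ∀ x : ℝ, ε ≤ x → x ≤ 1/2 →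
      ENNReal.ofReal (C1 * (x + ε) ^ (-(s*r))) ≤
        ∫⁻ y in Set.Icc (-1:ℝ) 1,
          ENNReal.ofReal |f x - f y| ^ r / ENNReal.ofReal |x - y| ^ (1 + s*r) := by
    intro x hx1 hx2
    have hA : 0 < x + ε := by linarith
    have hab : -(x + 2*ε) ≤ -ε := by linarith
    have hsub : Set.Icc (-(x + 2*ε)) (-ε) ⊆ Set.Icc (-1:ℝ) 1 := by
      intro y hy
      exact ⟨by linarith [hy.1], by linarith [hy.2]⟩
    have key1 : ∀ y ∈ Set.Icc (-(x+2*ε)) (-ε),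
        ENNReal.ofReal ((1/4:ℝ) ^ r * (x - y) ^ (-(1+s*r))) ≤
          ENNReal.ofReal |f x - f y| ^ r / ENNReal.ofReal |x - y| ^ (1+s*r) := by
      intro y hy
      have hxy : 0 < x - y := by linarith [hy.2]
      have hgap' : (1/4:ℝ) ≤ f y - f x := hgap x y hx1 hy.2
      have habs : |f x - f y| = f y - f x := by
        rw [abs_sub_comm]
        exact abs_of_nonneg (by linarith)
      have hnum : ENNReal.ofReal ((1/4:ℝ) ^ r) ≤ ENNReal.ofReal |f x - f y| ^ r := by
        rw [← ENNReal.ofReal_rpow_of_pos (by norm_num : (0:ℝ) < 1/4)]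
        exact ENNReal.rpow_le_rpow (ENNReal.ofReal_le_ofReal (by rw [habs]; linarith)) hr0.le
      calc ENNReal.ofReal ((1/4:ℝ) ^ r * (x - y) ^ (-(1+s*r)))
          = ENNReal.ofReal ((1/4:ℝ) ^ r) / ENNReal.ofReal |x - y| ^ (1+s*r) := by
            rw [abs_of_pos hxy, ENNReal.ofReal_rpow_of_pos hxy,
              ENNReal.ofReal_mul (by positivity), Real.rpow_neg hxy.le,
              ENNReal.ofReal_inv_of_pos (Real.rpow_pos_of_pos hxy _)]
            exact (div_eq_mul_inv _ _).symm
        _ ≤ _ := ENNReal.div_le_div_right hnum _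
    have hcont : ContinuousOn (fun y => (x - y) ^ (-(1+s*r))) (Set.Icc (-(x+2*ε)) (-ε)) := by
      apply ContinuousOn.rpow_const ((continuous_const.sub continuous_id).continuousOn)
      intro y hy
      exact Or.inl (by intro h; nlinarith [hy.2] : x - y ≠ 0)
    have hintgr : IntegrableOn (fun y => (1/4:ℝ) ^ r * (x - y) ^ (-(1+s*r)))
        (Set.Icc (-(x+2*ε)) (-ε)) := hcont.integrableOn_Icc.const_mul _
    have hnn : 0 ≤ᵐ[volume.restrict (Set.Icc (-(x+2*ε)) (-ε))]
        fun y => (1/4:ℝ) ^ r * (x - y) ^ (-(1+s*r)) :=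
      (ae_restrict_iff' measurableSet_Icc).2 (Filter.Eventually.of_forall fun y hy =>
        mul_nonneg (by positivity) (Real.rpow_nonneg (by linarith [hy.2]) _))
    have hcalc : (∫ y in Set.Icc (-(x+2*ε)) (-ε), (1/4:ℝ) ^ r * (x - y) ^ (-(1+s*r)))
        = C1 * (x + ε) ^ (-(s*r)) := by
      rw [MeasureTheory.integral_const_mul]
      have hmain : (∫ y in Set.Icc (-(x+2*ε)) (-ε), (x - y) ^ (-(1+s*r)))
          = C0 * (x + ε) ^ (-(s*r)) := by
        rw [MeasureTheory.integral_Icc_eq_integral_Ioc,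
          ← intervalIntegral.integral_of_le hab,
          intervalIntegral.integral_comp_sub_left (fun t => t ^ (-(1+s*r))) x,
          show x - -ε = x + ε by ring, show x - -(x+2*ε) = 2*(x+ε) by ring,
          integral_rpow (Or.inr ⟨by intro h; nlinarith, by
            intro h
            rcases Set.mem_uIcc.1 h with h' | h' <;> nlinarith [h'.1, h'.2]⟩)]
        have h2A : (2*(x+ε)) ^ (-(1+s*r)+1) = 2 ^ (-(s*r)) * (x+ε) ^ (-(s*r)) := by
          rw [show -(1+s*r)+1 = -(s*r) by ring]
          exact Real.mul_rpow (by norm_num) hA.le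
        rw [h2A, show -(1+s*r)+1 = -(s*r) by ring, hC0_def]
        field_simp
        ring
      rw [hmain, hC1_def]
      ring
    calc ENNReal.ofReal (C1 * (x + ε) ^ (-(s*r)))
        = ∫⁻ y in Set.Icc (-(x+2*ε)) (-ε),
            ENNReal.ofReal ((1/4:ℝ) ^ r * (x - y) ^ (-(1+s*r))) := by
          rw [← hcalc]
          exact ofReal_integral_eq_lintegral_ofReal hintgr hnn
      _ ≤ ∫⁻ y in Set.Icc (-(x+2*ε)) (-ε),
            ENNReal.ofReal |f x - f y| ^ r / ENNReal.ofReal |x - y| ^ (1+s*r) :=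
          setLIntegral_mono' measurableSet_Icc key1
      _ ≤ ∫⁻ y in Set.Icc (-1:ℝ) 1,
            ENNReal.ofReal |f x - f y| ^ r / ENNReal.ofReal |x - y| ^ (1+s*r) :=
          lintegral_mono_set hsub
  have houter : ∀ x ∈ Set.Icc ε (1/2:ℝ),
      ENNReal.ofReal (C1 ^ (q/r) * (x + ε) ^ (-(s*q))) ≤
        (∫⁻ y in Set.Icc (-1:ℝ) 1,
          ENNReal.ofReal |f x - f y| ^ r / ENNReal.ofReal |x - y| ^ (1 + s*r)) ^ (q/r) := by
    intro x hx
    have hA : 0 < x + ε := by linarith [hx.1]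
    have h1 := ENNReal.rpow_le_rpow (hinner x hx.1 hx.2) (by positivity : (0:ℝ) ≤ q/r)
    refine le_trans (le_of_eq ?_) h1
    rw [ENNReal.ofReal_rpow_of_pos (by positivity)]
    congr 1
    rw [Real.mul_rpow hC1pos.le (Real.rpow_nonneg hA.le _),
      ← Real.rpow_mul hA.le, show -(s*r) * (q/r) = -(s*q) by field_simp]
  have hε12 : ε ≤ (1/2:ℝ) := by linarith
  have hSsub : Set.Icc ε (1/2:ℝ) ⊆ Set.Icc (-1:ℝ) 1 := fun x hx =>
    ⟨by linarith [hx.1], by linarith [hx.2]⟩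
  have hcont2 : ContinuousOn (fun x : ℝ => (x + ε) ^ (-(s*q))) (Set.Icc ε (1/2:ℝ)) := by
    apply ContinuousOn.rpow_const ((continuous_id.add continuous_const).continuousOn)
    intro x hx
    exact Or.inl (by intro h; nlinarith [hx.1] : x + ε ≠ 0)
  have hintgr2 : IntegrableOn (fun x : ℝ => C1 ^ (q/r) * (x + ε) ^ (-(s*q)))
      (Set.Icc ε (1/2:ℝ)) := hcont2.integrableOn_Icc.const_mul _
  have hnn2 : 0 ≤ᵐ[volume.restrict (Set.Icc ε (1/2:ℝ))]
      fun x : ℝ => C1 ^ (q/r) * (x + ε) ^ (-(s*q)) :=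
    (ae_restrict_iff' measurableSet_Icc).2 (Filter.Eventually.of_forall fun x hx =>
      mul_nonneg (Real.rpow_nonneg hC1pos.le _) (Real.rpow_nonneg (by linarith [hx.1]) _))
  have he1 : ((2*ε):ℝ) ^ (1 - s*q) = 1/4 := by
    have h2e : (2:ℝ) * ε = 2 ^ (-(2 / (1 - s*q))) := by
      rw [hε_def]
      rw [show (2:ℝ) * 2 ^ (-(1 + 2 / (1 - s * q))) =
        2 ^ (1:ℝ) * 2 ^ (-(1 + 2 / (1 - s * q))) by rw [Real.rpow_one],
        ← Real.rpow_add two_pos]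
      norm_num
    rw [h2e, ← Real.rpow_mul (by norm_num : (0:ℝ) ≤ 2),
      show -(2 / (1 - s*q)) * (1 - s*q) = -2 by field_simp,
      show (-2:ℝ) = ((-2 : ℤ) : ℝ) by norm_num, Real.rpow_intCast]
    norm_num
  have he2 : (1/2:ℝ) ≤ ((1/2 + ε):ℝ) ^ (1 - s*q) := by
    have ha : ((1/2:ℝ)) ^ (1 - s*q) ≤ (1/2 + ε) ^ (1 - s*q) :=
      Real.rpow_le_rpow (by norm_num) (by linarith) (by linarith)
    have hb : (1/2:ℝ) ≤ ((1/2:ℝ)) ^ (1 - s*q) := by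
      calc (1/2:ℝ) = (1/2:ℝ) ^ (1:ℝ) := (Real.rpow_one _).symm
        _ ≤ (1/2:ℝ) ^ (1 - s*q) :=
          Real.rpow_le_rpow_of_exponent_ge (by norm_num) (by norm_num) (by nlinarith)
    linarith
  have hcalc2 : (∫ x in Set.Icc ε (1/2:ℝ), C1 ^ (q/r) * (x + ε) ^ (-(s*q)))
      = C1 ^ (q/r) * (((1/2 + ε) ^ (1 - s*q) - (2*ε) ^ (1 - s*q)) / (1 - s*q)) := by
    rw [MeasureTheory.integral_const_mul]
    congr 1
    rw [MeasureTheory.integral_Icc_eq_integral_Ioc,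
      ← intervalIntegral.integral_of_le hε12,
      intervalIntegral.integral_comp_add_right (fun t => t ^ (-(s*q))) ε,
      integral_rpow (Or.inl (by linarith : (-1:ℝ) < -(s*q))),
      show ε + ε = 2*ε by ring, show -(s*q) + 1 = 1 - s*q by ring]
  have main1 : ENNReal.ofReal (C1 ^ (q/r) * (1/(4*(1 - s*q)))) ≤
      ∫⁻ x in Set.Icc (-1:ℝ) 1,
        (∫⁻ y in Set.Icc (-1:ℝ) 1,
          ENNReal.ofReal |f x - f y| ^ r / ENNReal.ofReal |x - y| ^ (1 + s*r)) ^ (q/r) := by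
    calc ENNReal.ofReal (C1 ^ (q/r) * (1/(4*(1 - s*q))))
        ≤ ENNReal.ofReal (∫ x in Set.Icc ε (1/2:ℝ), C1 ^ (q/r) * (x + ε) ^ (-(s*q))) := by
          apply ENNReal.ofReal_le_ofReal
          rw [hcalc2]
          apply mul_le_mul_of_nonneg_left _ (Real.rpow_nonneg hC1pos.le _)
          rw [div_le_div_iff₀ (by linarith : (0:ℝ) < 4*(1-s*q)) h1sq, he1]
          nlinarith [he2]
      _ = ∫⁻ x in Set.Icc ε (1/2:ℝ),
            ENNReal.ofReal (C1 ^ (q/r) * (x + ε) ^ (-(s*q))) :=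
          ofReal_integral_eq_lintegral_ofReal hintgr2 hnn2
      _ ≤ ∫⁻ x in Set.Icc ε (1/2:ℝ),
            (∫⁻ y in Set.Icc (-1:ℝ) 1,
              ENNReal.ofReal |f x - f y| ^ r / ENNReal.ofReal |x - y| ^ (1 + s*r)) ^ (q/r) :=
          setLIntegral_mono' measurableSet_Icc houter
      _ ≤ _ := lintegral_mono_set hSsub
  have step := ENNReal.rpow_le_rpow main1 (by positivity : (0:ℝ) ≤ 1/q)
  refine le_trans ?_ step
  rw [ENNReal.ofReal_rpow_of_pos (by positivity)]
  apply ENNReal.ofReal_le_ofReal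
  have hsplit : (C1 ^ (q/r) * (1/(4*(1 - s*q)))) ^ (1/q)
      = C1 ^ (1/r) * ((1/4:ℝ) ^ (1/q) * (1 - s*q) ^ (-(1/q))) := by
    rw [Real.mul_rpow (by positivity) (by positivity)]
    congr 1
    · rw [← Real.rpow_mul hC1pos.le, show (q/r) * (1/q) = 1/r by field_simp]
    · rw [show (1:ℝ)/(4*(1 - s*q)) = (1/4) * (1 - s*q)⁻¹ by field_simp,
        Real.mul_rpow (by norm_num) (by positivity),
        Real.inv_rpow h1sq.le, ← Real.rpow_neg h1sq.le]
  rw [hsplit]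
  have hC116 : (1/16:ℝ) ≤ C1 ^ (1/r) := by
    have hsp : C1 ^ (1/r) = (1/4:ℝ) * C0 ^ (1/r) := by
      rw [hC1_def, Real.mul_rpow (by positivity) hC0pos.le,
        ← Real.rpow_mul (by norm_num : (0:ℝ) ≤ 1/4), mul_one_div, div_self hrne,
        Real.rpow_one]
    rw [hsp]
    have := key_quarter' hs hs1 hr
    rw [← hC0_def] at this
    nlinarith [Real.rpow_nonneg hC0pos.le (1/r)]
  have h4q : (1/4:ℝ) ≤ (1/4:ℝ) ^ (1/q) := by
    calc (1/4:ℝ) = (1/4:ℝ) ^ (1:ℝ) := (Real.rpow_one _).symm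
      _ ≤ (1/4:ℝ) ^ (1/q) := Real.rpow_le_rpow_of_exponent_ge (by norm_num) (by norm_num)
          (by rw [div_le_one hq0]; exact hq)
  have hpn : (0:ℝ) ≤ (1 - s*q) ^ (-(1/q)) := Real.rpow_nonneg h1sq.le _
  calc (1/64:ℝ) * (1 - s*q) ^ (-(1/q)) = (1/16) * ((1/4) * (1 - s*q) ^ (-(1/q))) := by ring
    _ ≤ C1 ^ (1/r) * ((1/4:ℝ) ^ (1/q) * (1 - s*q) ^ (-(1/q))) :=
      mul_le_mul hC116 (mul_le_mul_of_nonneg_right h4q hpn) (by positivity) (by positivity)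
end
end
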